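/- Let Q be a labelled quiver with labels X and let F ⊆ R⟨X⟩_Q be a set of polynomials uniformly compatible with Q. Then for any f ∈ R⟨X⟩ the following are equivalent: (1) f is compatible with Q and lies in the two-sided ideal generated by F; (2) f is compatible with Q and can be rewritten to zero using F; (3) f is a Q-consequence of F. -/

import Mathlib

open scoped BigOperators

/-- The free `R`-algebra `R⟨X⟩` on `X`, as the monoid algebra over `R`
of the free monoid `⟨X⟩` of words over `X`. -/
abbrev FreeAlg (R X : Type*) [CommRing R] := MonoidAlgebra R (FreeMonoid X)

/-- The monomial in `R⟨X⟩` corresponding to a word `m ∈ ⟨X⟩`. -/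
noncomputable def monom (R : Type*) [CommRing R] {X : Type*} (m : FreeMonoid X) : FreeAlg R X :=
  MonoidAlgebra.of R (FreeMonoid X) m

/-- `h` is obtained from `f` by a rewriting step using `g`: some monomial `m_g` in the
support of `g` divides a monomial `a·m_g·b` in the support of `f`, and
`h = f + λ·a·g·b` for some `λ ∈ R`. -/
def RewriteStep {R X : Type*} [CommRing R] (g f h : FreeAlg R X) : Prop :=
  ∃ (a b mg : FreeMonoid X) (lam : R),
    mg ∈ (MonoidAlgebra.coeff g).support ∧
    a * mg * b ∈ (MonoidAlgebra.coeff f).support ∧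
    h = f + lam • (monom R a * g * monom R b)

/-- `f` can be rewritten to `h` using the set `G`: there is a finite chain of rewriting
steps, each using an element of `G`, leading from `f` to `h`. -/
def RewritesTo {R X : Type*} [CommRing R] (G : Set (FreeAlg R X)) (f h : FreeAlg R X) : Prop :=
  Relation.ReflTransGen (fun p q => ∃ g ∈ G, RewriteStep g p q) f h

/-- Membership in the two-sided ideal `(F)` generated by `F`:
`f` is a finite sum `Σᵢ aᵢ·fᵢ·bᵢ` with `aᵢ, bᵢ ∈ R⟨X⟩` and `fᵢ ∈ F`. -/
def MemIdeal {R X : Type*} [CommRing R] (F : Set (FreeAlg R X)) (f : FreeAlg R X) : Prop :=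
  ∃ (n : ℕ) (a b g : Fin n → FreeAlg R X),
    (∀ i, g i ∈ F) ∧ f = ∑ i, a i * g i * b i

/-- A labelled quiver `Q = (V, E, X, s, t, l)`: a directed multigraph with vertex set `V`,
edge set `E`, source and target maps `s, t : E → V` and labelling `l : E → X`. -/
structure LabelledQuiver (V E X : Type*) where
  src : E → V
  tgt : E → V
  lab : E → X

/-- Paths in a labelled quiver `Q`; `LQPath Q u w` is the type of paths with source `u` and
target `w`.  `nil v` is the empty path at `v`; `cons e p` appends the edge `e` after `p`. -/
inductive LQPath {V E X : Type*} (Q : LabelledQuiver V E X) : V → V → Type _ where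
  | nil (v : V) : LQPath Q v v
  | cons {u : V} (e : E) (p : LQPath Q u (Q.src e)) : LQPath Q u (Q.tgt e)

namespace LQPath
variable {V E X : Type*} {Q : LabelledQuiver V E X}
/-- The label `l(p) = l(eₙ)⋯l(e₁) ∈ ⟨X⟩` of a path; the empty path has label `1`. -/
def label : {u w : V} → LQPath Q u w → FreeMonoid X
  | _, _, .nil _ => 1
  | _, _, .cons e p => FreeMonoid.of (Q.lab e) * p.label
end LQPath

namespace LabelledQuiver

variable {V E X : Type*} (Q : LabelledQuiver V E X)

/-- The set of signatures `σ(m) = {(s(p), t(p)) : p a path in Q with l(p) = m}`. -/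
def sigmaM (m : FreeMonoid X) : Set (V × V) :=
  {vw | ∃ p : LQPath Q vw.1 vw.2, p.label = m}

variable {R : Type*} [CommRing R]

/-- The set of signatures `σ(f) = ⋂_{m ∈ supp(f)} σ(m)` of a polynomial. -/
def sigmaP (f : FreeAlg R X) : Set (V × V) :=
  ⋂ m ∈ (MonoidAlgebra.coeff f).support, Q.sigmaM m

/-- `f` is compatible with `Q` if `σ(f) ≠ ∅`. -/
def Compatible (f : FreeAlg R X) : Prop :=
  (Q.sigmaP f).Nonempty

/-- `f` is uniformly compatible with `Q` if it is compatible and all monomials in its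
support have the same set of signatures. -/
def UniformlyCompatible (f : FreeAlg R X) : Prop :=
  Q.Compatible f ∧
    ∀ m ∈ (MonoidAlgebra.coeff f).support, ∀ m' ∈ (MonoidAlgebra.coeff f).support,
      Q.sigmaM m = Q.sigmaM m'

/-- The set of sources `s(f)` of a polynomial: the projection of `σ(f)` to the first
component. -/
def srcSet (f : FreeAlg R X) : Set V := Prod.fst '' Q.sigmaP f

/-- The set of targets `t(f)` of a polynomial: the projection of `σ(f)` to the second
component. -/
def tgtSet (f : FreeAlg R X) : Set V := Prod.snd '' Q.sigmaP f

end LabelledQuiver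

/-- `f` is a `Q`-consequence of `F`: `f` is compatible with `Q` and there are finitely many
uniformly compatible `aᵢ, bᵢ` and `fᵢ ∈ F` with `f = Σᵢ aᵢ·fᵢ·bᵢ` where each summand
satisfies `σ(aᵢ·fᵢ·bᵢ) ⊇ σ(f)`. -/
def LabelledQuiver.QConsequence {V E X R : Type*} [CommRing R] (Q : LabelledQuiver V E X)
    (F : Set (FreeAlg R X)) (f : FreeAlg R X) : Prop :=
  Q.Compatible f ∧
    ∃ (n : ℕ) (a b g : Fin n → FreeAlg R X),
      (∀ i, Q.UniformlyCompatible (a i)) ∧ (∀ i, Q.UniformlyCompatible (b i)) ∧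
      (∀ i, g i ∈ F) ∧ f = ∑ i, a i * g i * b i ∧
      ∀ i, Q.sigmaP f ⊆ Q.sigmaP (a i * g i * b i)

/-!
(1) ⇒ (2): write `f` as a finite sum of terms `λ·a·g·b` with `a, b` words and `g ∈ F`. If the
sum is nonzero, some monomial of its support occurs in one of the terms, so subtracting that
term is a rewriting step; induct on the number of terms.

(2) ⇒ (3): the signature set can only grow along a rewriting chain: for uniformly compatible
`g`, every monomial `a·m·b` (`m ∈ supp(g)`) of the added term has the same signatures as the
monomial of `f` that triggered the step. Reading the chain backwards exhibits `f` as the sum of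
the terms `λ·a·g·b`, where `λ·a` and `b` are single monomials and hence uniformly compatible.

(3) ⇒ (1) is immediate.
-/

namespace LQPath

variable {V E X : Type*} {Q : LabelledQuiver V E X}

/-- `q.comp p` first follows `p`, then `q`. -/
def comp : {u v w : V} → LQPath Q v w → LQPath Q u v → LQPath Q u w
  | _, _, _, .nil _, p => p
  | _, _, _, .cons e q, p => .cons e (q.comp p)

lemma label_comp : ∀ {u v w : V} (q : LQPath Q v w) (p : LQPath Q u v),
    (q.comp p).label = q.label * p.label
  | _, _, _, .nil _, _ => by rw [comp, label, one_mul]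
  | _, _, _, .cons e q, p => by rw [comp, label, label, label_comp q p, mul_assoc]

lemma exists_comp_of_label_eq_mul (m₁ : FreeMonoid X) {u w : V} (p : LQPath Q u w)
    {m₂ : FreeMonoid X} (h : p.label = m₁ * m₂) :
    ∃ (v : V) (q : LQPath Q v w) (r : LQPath Q u v), q.label = m₁ ∧ r.label = m₂ := by
  induction m₁ using FreeMonoid.inductionOn' generalizing u w p with
  | one => exact ⟨w, .nil w, p, by rw [label], by rw [h, one_mul]⟩
  | of_mul x m₁ ih =>
    rw [mul_assoc] at h
    cases p with
    | nil =>
      have hlen := congrArg FreeMonoid.length h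
      simp only [label, FreeMonoid.length_one, FreeMonoid.length_mul, FreeMonoid.length_of] at hlen
      omega
    | cons e p =>
      rw [label] at h
      obtain ⟨hx, hp⟩ := List.cons.inj (congrArg FreeMonoid.toList h)
      obtain ⟨v, q, r, hq, hr⟩ := ih p (FreeMonoid.toList.injective hp)
      exact ⟨v, .cons e q, r, by rw [label, hq, hx], hr⟩

end LQPath

section Monomials

variable {X R : Type*} [CommRing R]

lemma support_coeff_monom_subset (m : FreeMonoid X) :
    (MonoidAlgebra.coeff (monom R m)).support ⊆ {m} :=
  Finsupp.support_single_subset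

lemma exists_of_mem_support_monom_mul_mul_monom {a b m : FreeMonoid X} {g : FreeAlg R X}
    (hm : m ∈ (MonoidAlgebra.coeff (monom R a * g * monom R b)).support) :
    ∃ mg ∈ (MonoidAlgebra.coeff g).support, m = a * mg * b := by
  classical
  obtain ⟨m', hm', rfl⟩ :=
    Finset.mem_image.mp (MonoidAlgebra.support_coeff_mul_single_subset _ _ _ hm)
  obtain ⟨mg, hmg, rfl⟩ :=
    Finset.mem_image.mp (MonoidAlgebra.support_coeff_single_mul_subset _ _ _ hm')
  exact ⟨mg, hmg, rfl⟩

lemma single_mul_mul_single (a b : FreeMonoid X) (r s : R) (g : FreeAlg R X) :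
    MonoidAlgebra.single a r * g * MonoidAlgebra.single b s
      = (r * s) • (monom R a * g * monom R b) := by
  have single_eq (m : FreeMonoid X) (r : R) : MonoidAlgebra.single m r = r • monom R m := by
    rw [monom, MonoidAlgebra.of_apply, MonoidAlgebra.smul_single', mul_one]
  rw [single_eq, single_eq, smul_mul_assoc, mul_smul_comm, smul_mul_assoc, smul_smul, mul_comm]

end Monomials

namespace LabelledQuiver

variable {V E X R : Type*} [CommRing R] {Q : LabelledQuiver V E X}

lemma mem_sigmaM_mul {m₁ m₂ : FreeMonoid X} {u w : V} :
    (u, w) ∈ Q.sigmaM (m₁ * m₂) ↔ ∃ v, (v, w) ∈ Q.sigmaM m₁ ∧ (u, v) ∈ Q.sigmaM m₂ := by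
  constructor
  · rintro ⟨p, hp⟩
    obtain ⟨v, q, r, hq, hr⟩ := LQPath.exists_comp_of_label_eq_mul m₁ p hp
    exact ⟨v, ⟨q, hq⟩, ⟨r, hr⟩⟩
  · rintro ⟨v, ⟨q, hq⟩, ⟨r, hr⟩⟩
    exact ⟨q.comp r, by rw [LQPath.label_comp, hq, hr]⟩

lemma sigmaM_mul_mul_congr {m m' : FreeMonoid X} (h : Q.sigmaM m = Q.sigmaM m')
    (a b : FreeMonoid X) : Q.sigmaM (a * m * b) = Q.sigmaM (a * m' * b) := by
  ext ⟨u, w⟩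
  simp only [mul_assoc, mem_sigmaM_mul, h]

lemma sigmaM_nonempty_of_mul {m₁ m₂ : FreeMonoid X} (h : (Q.sigmaM (m₁ * m₂)).Nonempty) :
    (Q.sigmaM m₁).Nonempty ∧ (Q.sigmaM m₂).Nonempty := by
  obtain ⟨⟨u, w⟩, huw⟩ := h
  obtain ⟨v, hvw, huv⟩ := mem_sigmaM_mul.mp huw
  exact ⟨⟨_, hvw⟩, ⟨_, huv⟩⟩

lemma subset_sigmaP_iff {f : FreeAlg R X} {S : Set (V × V)} :
    S ⊆ Q.sigmaP f ↔ ∀ m ∈ (MonoidAlgebra.coeff f).support, S ⊆ Q.sigmaM m :=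
  Set.subset_iInter₂_iff

lemma sigmaP_subset_sigmaM {f : FreeAlg R X} {m : FreeMonoid X}
    (hm : m ∈ (MonoidAlgebra.coeff f).support) : Q.sigmaP f ⊆ Q.sigmaM m :=
  subset_sigmaP_iff.mp le_rfl m hm

lemma sigmaP_subset_sigmaP_of_support_subset {f g : FreeAlg R X}
    (h : (MonoidAlgebra.coeff g).support ⊆ (MonoidAlgebra.coeff f).support) :
    Q.sigmaP f ⊆ Q.sigmaP g :=
  subset_sigmaP_iff.mpr fun _ hm => sigmaP_subset_sigmaM (h hm)

lemma sigmaP_subset_sigmaP_smul (f : FreeAlg R X) (r : R) : Q.sigmaP f ⊆ Q.sigmaP (r • f) :=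
  sigmaP_subset_sigmaP_of_support_subset Finsupp.support_smul

lemma inter_subset_sigmaP_add (f g : FreeAlg R X) :
    Q.sigmaP f ∩ Q.sigmaP g ⊆ Q.sigmaP (f + g) := by
  classical
  refine subset_sigmaP_iff.mpr fun m hm => ?_
  rcases Finset.mem_union.mp (Finsupp.support_add hm) with h | h
  · exact Set.inter_subset_left.trans (sigmaP_subset_sigmaM h)
  · exact Set.inter_subset_right.trans (sigmaP_subset_sigmaM h)

lemma uniformlyCompatible_of_support_subset_singleton {f : FreeAlg R X} {m : FreeMonoid X}
    (hf : (MonoidAlgebra.coeff f).support ⊆ {m}) (hm : (Q.sigmaM m).Nonempty) :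
    Q.UniformlyCompatible f := by
  have eq_m : ∀ m' ∈ (MonoidAlgebra.coeff f).support, m' = m := fun m' h =>
    Finset.mem_singleton.mp (hf h)
  refine ⟨hm.mono (subset_sigmaP_iff.mpr fun m' h => by rw [eq_m m' h]), fun m₁ h₁ m₂ h₂ => ?_⟩
  rw [eq_m m₁ h₁, eq_m m₂ h₂]

lemma sigmaM_subset_sigmaP_monom_mul_mul_monom {g : FreeAlg R X} (hg : Q.UniformlyCompatible g)
    {mg : FreeMonoid X} (hmg : mg ∈ (MonoidAlgebra.coeff g).support) (a b : FreeMonoid X) :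
    Q.sigmaM (a * mg * b) ⊆ Q.sigmaP (monom R a * g * monom R b) := by
  refine subset_sigmaP_iff.mpr fun m hm => ?_
  obtain ⟨mg', hmg', rfl⟩ := exists_of_mem_support_monom_mul_mul_monom hm
  rw [sigmaM_mul_mul_congr (hg.2 mg hmg mg' hmg')]

end LabelledQuiver

section Ideal

variable {X R : Type*} [CommRing R]

/-- The summands `λ·a·g·b` (`a, b` words, `g ∈ F`) that a single rewriting step can remove. -/
def rewriteTerms (F : Set (FreeAlg R X)) : Set (FreeAlg R X) :=
  {t | ∃ g ∈ F, ∃ (a b : FreeMonoid X) (r : R), t = r • (monom R a * g * monom R b)}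

lemma rewritesTo_zero_of_multiset_sum {F : Set (FreeAlg R X)} (s : Multiset (FreeAlg R X))
    (hs : ∀ t ∈ s, t ∈ rewriteTerms F) : RewritesTo F s.sum 0 := by
  classical
  induction s using Multiset.strongInductionOn with
  | ih s ih =>
  by_cases hzero : s.sum = 0
  · rw [hzero]; exact .refl
  obtain ⟨m, hm⟩ : (MonoidAlgebra.coeff s.sum).support.Nonempty :=
    Finsupp.support_nonempty_iff.mpr (mt MonoidAlgebra.coeff_eq_zero.mp hzero)
  have coeff_sum : MonoidAlgebra.coeff s.sum = (s.map MonoidAlgebra.coeff).sum :=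
    map_multiset_sum MonoidAlgebra.coeffAddEquiv s
  obtain ⟨_, hcoeff, hmt⟩ := Finsupp.mem_support_multiset_sum m (coeff_sum ▸ hm)
  obtain ⟨t, ht, rfl⟩ := Multiset.mem_map.mp hcoeff
  obtain ⟨g, hg, a, b, r, rfl⟩ := hs t ht
  obtain ⟨mg, hmg, rfl⟩ := exists_of_mem_support_monom_mul_mul_monom (Finsupp.support_smul hmt)
  have hstep : RewriteStep g s.sum (s.erase (r • (monom R a * g * monom R b))).sum := by
    refine ⟨a, b, mg, -r, hmg, hm, ?_⟩
    rw [← Multiset.sum_erase ht, neg_smul]; abel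
  exact .head ⟨g, hg, hstep⟩
    (ih _ (Multiset.erase_lt.mpr ht) fun t' ht' => hs t' (Multiset.mem_of_mem_erase ht'))

lemma mul_mul_mem_closure_rewriteTerms {F : Set (FreeAlg R X)} {g : FreeAlg R X} (hg : g ∈ F)
    (p q : FreeAlg R X) : p * g * q ∈ AddSubmonoid.closure (rewriteTerms F) := by
  induction p using MonoidAlgebra.induction_linear with
  | zero => rw [zero_mul, zero_mul]; exact zero_mem _
  | add p₁ p₂ h₁ h₂ => rw [add_mul, add_mul]; exact add_mem h₁ h₂
  | single a r =>
  induction q using MonoidAlgebra.induction_linear with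
  | zero => rw [mul_zero]; exact zero_mem _
  | add q₁ q₂ h₁ h₂ => rw [mul_add]; exact add_mem h₁ h₂
  | single b s =>
  exact AddSubmonoid.subset_closure ⟨g, hg, a, b, r * s, single_mul_mul_single a b r s g⟩

lemma MemIdeal.mem_closure_rewriteTerms {F : Set (FreeAlg R X)} {f : FreeAlg R X}
    (hf : MemIdeal F f) : f ∈ AddSubmonoid.closure (rewriteTerms F) := by
  obtain ⟨n, a, b, g, hg, rfl⟩ := hf
  exact sum_mem fun i _ => mul_mul_mem_closure_rewriteTerms (hg i) (a i) (b i)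

lemma MemIdeal.rewritesTo_zero {F : Set (FreeAlg R X)} {f : FreeAlg R X} (hf : MemIdeal F f) :
    RewritesTo F f 0 := by
  obtain ⟨s, hs, rfl⟩ := AddSubmonoid.exists_multiset_of_mem_closure hf.mem_closure_rewriteTerms
  exact rewritesTo_zero_of_multiset_sum s hs

end Ideal

namespace LabelledQuiver

variable {V E X R : Type*} [CommRing R] (Q : LabelledQuiver V E X)

/-- The decompositions in the definition of a `Q`-consequence, with `σ(f)` replaced by an
arbitrary `S` so that they can be built up along a rewriting chain. -/
def IsQCombination (F : Set (FreeAlg R X)) (S : Set (V × V)) (p : FreeAlg R X) : Prop :=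
  ∃ (n : ℕ) (a b g : Fin n → FreeAlg R X),
    (∀ i, Q.UniformlyCompatible (a i)) ∧ (∀ i, Q.UniformlyCompatible (b i)) ∧
    (∀ i, g i ∈ F) ∧ p = ∑ i, a i * g i * b i ∧ ∀ i, S ⊆ Q.sigmaP (a i * g i * b i)

variable {Q} {F : Set (FreeAlg R X)} {S : Set (V × V)}

lemma isQCombination_zero : Q.IsQCombination F S 0 :=
  ⟨0, Fin.elim0, Fin.elim0, Fin.elim0, Fin.rec0, Fin.rec0, Fin.rec0, by simp, Fin.rec0⟩

lemma IsQCombination.add_summand {p a b g : FreeAlg R X} (hp : Q.IsQCombination F S p)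
    (ha : Q.UniformlyCompatible a) (hb : Q.UniformlyCompatible b) (hg : g ∈ F)
    (hS : S ⊆ Q.sigmaP (a * g * b)) : Q.IsQCombination F S (a * g * b + p) := by
  obtain ⟨n, A, B, G, hA, hB, hG, rfl, hσ⟩ := hp
  refine ⟨n + 1, Fin.cons a A, Fin.cons b B, Fin.cons g G, Fin.cons ha hA, Fin.cons hb hB,
    Fin.cons hg hG, ?_, Fin.cons hS hσ⟩
  rw [Fin.sum_univ_succ]
  rfl

lemma isQCombination_of_rewritesTo_zero (hF : ∀ g ∈ F, Q.UniformlyCompatible g)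
    (hS : S.Nonempty) {p : FreeAlg R X} (hp : RewritesTo F p 0) (hSp : S ⊆ Q.sigmaP p) :
    Q.IsQCombination F S p := by
  induction hp using Relation.ReflTransGen.head_induction_on with
  | refl => exact isQCombination_zero
  | @head p _ hstep _ ih =>
  obtain ⟨g, hg, a, b, mg, r, hmg, hm, rfl⟩ := hstep
  have hS_term : S ⊆ Q.sigmaP (monom R a * g * monom R b) :=
    (hSp.trans (sigmaP_subset_sigmaM hm)).trans
      (sigmaM_subset_sigmaP_monom_mul_mul_monom (hF g hg) hmg a b)
  have hS_next : S ⊆ Q.sigmaP (p + r • (monom R a * g * monom R b)) :=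
    (Set.subset_inter hSp (hS_term.trans (sigmaP_subset_sigmaP_smul _ r))).trans
      (inter_subset_sigmaP_add _ _)
  obtain ⟨ha_mg, hb⟩ := sigmaM_nonempty_of_mul (hS.mono (hSp.trans (sigmaP_subset_sigmaM hm)))
  have hsplit : p = (-r) • monom R a * g * monom R b + (p + r • (monom R a * g * monom R b)) := by
    rw [smul_mul_assoc, smul_mul_assoc, neg_smul]; abel
  rw [hsplit]
  refine (ih hS_next).add_summand
    (uniformlyCompatible_of_support_subset_singleton
      (Finsupp.support_smul.trans (support_coeff_monom_subset a)) (sigmaM_nonempty_of_mul ha_mg).1)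
    (uniformlyCompatible_of_support_subset_singleton (support_coeff_monom_subset b) hb) hg ?_
  rw [smul_mul_assoc, smul_mul_assoc]
  exact hS_term.trans (sigmaP_subset_sigmaP_smul _ _)

end LabelledQuiver

/-- For `F` a set of polynomials uniformly compatible with `Q` and any
`f ∈ R⟨X⟩`, the following are equivalent: (1) `f` is compatible with `Q` and lies in the
two-sided ideal generated by `F`; (2) `f` is compatible with `Q` and can be rewritten to zero
using `F`; (3) `f` is a `Q`-consequence of `F`. -/
theorem qConsequence_tfae {R V E X : Type*} [CommRing R] (Q : LabelledQuiver V E X)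
    (F : Set (FreeAlg R X)) (hF : ∀ g ∈ F, Q.UniformlyCompatible g) (f : FreeAlg R X) :
    ((Q.Compatible f ∧ MemIdeal F f) ↔ (Q.Compatible f ∧ RewritesTo F f 0)) ∧
      ((Q.Compatible f ∧ RewritesTo F f 0) ↔ Q.QConsequence F f) := by
  have h12 : Q.Compatible f ∧ MemIdeal F f → Q.Compatible f ∧ RewritesTo F f 0 :=
    fun ⟨hc, hf⟩ => ⟨hc, hf.rewritesTo_zero⟩
  have h23 : Q.Compatible f ∧ RewritesTo F f 0 → Q.QConsequence F f :=
    fun ⟨hc, hf⟩ => ⟨hc, Q.isQCombination_of_rewritesTo_zero hF hc hf le_rfl⟩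
  have h31 : Q.QConsequence F f → Q.Compatible f ∧ MemIdeal F f :=
    fun ⟨hc, n, a, b, g, _, _, hg, hsum, _⟩ => ⟨hc, n, a, b, g, hg, hsum⟩
  exact ⟨⟨h12, fun h => h31 (h23 h)⟩, ⟨h23, fun h => h12 (h31 h)⟩⟩
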